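/- arXiv:1903.01929 — 4 statements merged into one kernel-verified Lean document; each statement's English description precedes it below -/
import Mathlib

section
/- Let Π be a profinite group, ℓ a prime, T a finitely generated free ℤ_ℓ-module with a continuous Π-action, V = T ⊗ ℚ_ℓ, and M = T ⊗ ℚ_ℓ/ℤ_ℓ. Suppose that for every open subgroup U ⊆ Π one has V^U = V^Π (e.g. because the Zariski closure of the image of Π in GL(V) is connected). Then for every open subgroup U ⊆ Π, the index [M^U : M^Π] is finite. -/
/-! Because `V^U = V^Γ`, finitely many `g ∈ U` already cut out `V^Γ` as the common kernel of the
maps `ρ g - 1`. On a complement `W` of `V^Γ` the map `v ↦ (ρ g v - v)_g` is therefore injective,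
hence bounded below, so the vectors of `W` that every `g ∈ U` moves by an element of `T` form a
bounded set. Splitting off the `Γ`-invariant part, `latticeInvariants U` lies in a compact set plus
`latticeInvariants ⊤`; the latter is an open subgroup, as it contains `T`, so it has finite index.
-/

open scoped Classical

/-- The additive subgroup `{v ∈ V | ∀ g ∈ U, ρ g v - v ∈ T}` of `V = ℚ_ℓ^r`, whose image in
`M = V/T` is exactly `M^U` (`T` being the unit-ball lattice). -/
noncomputable def latticeInvariants (ℓ r : ℕ) [Fact ℓ.Prime]
    (Γ : Type*) [Group Γ] (ρ : Representation ℚ_[ℓ] Γ (Fin r → ℚ_[ℓ]))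
    (U : Subgroup Γ) : AddSubgroup (Fin r → ℚ_[ℓ]) where
  carrier := {v | ∀ g ∈ U, ∀ i, ‖(ρ g v - v) i‖ ≤ 1}
  zero_mem' := by intro g hg i; simp
  add_mem' := by
    intro a b ha hb g hg i
    have h : (ρ g (a + b) - (a + b)) i = (ρ g a - a) i + (ρ g b - b) i := by
      simp [map_add]; ring
    rw [h]
    exact le_trans (Padic.nonarchimedean _ _) (max_le (ha g hg i) (hb g hg i))
  neg_mem' := by
    intro a ha g hg i
    have h : (ρ g (-a) - (-a)) i = -((ρ g a - a) i) := by simp [map_neg]; ring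
    rw [h, norm_neg]
    exact ha g hg i

open Metric Pointwise

theorem Submodule.exists_finset_iInf_eq {R M ι : Type*} [Ring R] [AddCommGroup M] [Module R M]
    [IsArtinian R M] (p : ι → Submodule R M) : ∃ s : Finset ι, ⨅ i ∈ s, p i = ⨅ i, p i := by
  -- Artinian means that every element of the dual lattice is compact.
  have hcompact : IsCompactElement (OrderDual.toDual (⨅ i, p i)) :=
    (CompleteLattice.isSupFiniteCompact_iff_all_elements_compact _).mp
      (CompleteLattice.WellFoundedGT.isSupFiniteCompact _) _
  obtain ⟨s, hs⟩ :=
    CompleteLattice.IsCompactElement.exists_finset_of_le_iSup _ hcompact (OrderDual.toDual ∘ p) le_rfl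
  exact ⟨s, le_antisymm hs (le_iInf₂ fun i _ => iInf_le p i)⟩

theorem LinearMap.exists_norm_le_of_iInf_ker_eq_bot {𝕜 E F ι : Type*} [NontriviallyNormedField 𝕜]
    [CompleteSpace 𝕜] [NormedAddCommGroup E] [NormedSpace 𝕜 E] [FiniteDimensional 𝕜 E]
    [NormedAddCommGroup F] [NormedSpace 𝕜 F] (f : ι → E →ₗ[𝕜] F)
    (hf : ⨅ i, LinearMap.ker (f i) = ⊥) : ∃ C, ∀ v, (∀ i, ‖f i v‖ ≤ 1) → ‖v‖ ≤ C := by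
  obtain ⟨s, hs⟩ := Submodule.exists_finset_iInf_eq fun i => LinearMap.ker (f i)
  let Φ : E →ₗ[𝕜] s → F := LinearMap.pi fun i => f i
  have hΦ : LinearMap.ker Φ = ⊥ := by
    rw [LinearMap.ker_pi, ← hf, ← hs, iInf_subtype']
  obtain ⟨K, -, hK⟩ := Φ.exists_antilipschitzWith hΦ
  refine ⟨K, fun v hv => ?_⟩
  calc ‖v‖ ≤ K * ‖Φ v‖ := by simpa using hK.le_mul_dist v 0
    _ ≤ K * 1 := by
      gcongr
      exact (pi_norm_le_iff_of_nonneg zero_le_one).mpr fun i => hv i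
    _ = K := mul_one _

theorem AddSubgroup.relIndex_ne_zero_of_subset_add {G : Type*} [AddCommGroup G]
    [TopologicalSpace G] [SeparatelyContinuousAdd G] {H L : AddSubgroup G}
    (hH : IsOpen (H : Set G)) {K : Set G} (hK : IsCompact K)
    (hL : (L : Set G) ⊆ K + (H : Set G)) :
    H.relIndex L ≠ 0 := by
  have := QuotientAddGroup.discreteTopology hH
  let f : L →+ G ⧸ H := (QuotientAddGroup.mk' H).comp L.subtype
  have hker : f.ker = H.addSubgroupOf L := by ext; simp [f, AddSubgroup.mem_addSubgroupOf]
  have hrange : (f.range : Set (G ⧸ H)) ⊆ QuotientAddGroup.mk '' K := by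
    rintro - ⟨x, rfl⟩
    obtain ⟨k, hk, h, hh, hx⟩ := hL x.2
    exact ⟨k, hk, QuotientAddGroup.eq.mpr (by simpa [← hx] using hh)⟩
  have : Finite f.range :=
    ((hK.image continuous_quotient_mk').finite_of_discrete.subset hrange).to_subtype
  rw [AddSubgroup.relIndex, ← hker, AddSubgroup.index_ker]
  exact Nat.card_ne_zero.mpr ⟨inferInstance, this⟩

section latticeInvariants

variable {ℓ r : ℕ} [Fact ℓ.Prime] {Γ : Type*} [Group Γ]
  (ρ : Representation ℚ_[ℓ] Γ (Fin r → ℚ_[ℓ]))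

theorem mem_latticeInvariants_iff {U : Subgroup Γ} {v : Fin r → ℚ_[ℓ]} :
    v ∈ latticeInvariants ℓ r Γ ρ U ↔ ∀ g ∈ U, ‖ρ g v - v‖ ≤ 1 := by
  simp only [pi_norm_le_iff_of_nonneg zero_le_one]
  rfl

theorem invariants_subset_latticeInvariants (U : Subgroup Γ) :
    (ρ.invariants : Set (Fin r → ℚ_[ℓ])) ⊆ latticeInvariants ℓ r Γ ρ U := by
  intro w hw
  rw [SetLike.mem_coe, mem_latticeInvariants_iff]
  intro g _
  simp [show ρ g w = w from hw g]

theorem isOpen_latticeInvariants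
    (hlat : ∀ (g : Γ) (x : Fin r → ℚ_[ℓ]), (∀ i, ‖x i‖ ≤ 1) → ∀ i, ‖ρ g x i‖ ≤ 1)
    (U : Subgroup Γ) : IsOpen (latticeInvariants ℓ r Γ ρ U : Set (Fin r → ℚ_[ℓ])) := by
  refine AddSubgroup.isOpen_of_mem_nhds _
    (Filter.mem_of_superset (closedBall_mem_nhds 0 one_pos) fun t ht => ?_)
  rw [mem_closedBall_zero_iff, pi_norm_le_iff_of_nonneg zero_le_one] at ht
  intro g _ i
  calc ‖(ρ g t - t) i‖ = dist (ρ g t i) (t i) := (dist_eq_norm _ _).symm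
    _ ≤ max (dist (ρ g t i) 0) (dist 0 (t i)) := dist_triangle_max _ 0 _
    _ ≤ 1 := max_le (by simpa using hlat g t ht i) (by simpa using ht i)

theorem exists_norm_le_of_mem_latticeInvariants {U : Subgroup Γ}
    (hV : ∀ v : Fin r → ℚ_[ℓ], (∀ g ∈ U, ρ g v = v) → ∀ g : Γ, ρ g v = v) {W : Submodule ℚ_[ℓ] (Fin r → ℚ_[ℓ])}
    (hW : IsCompl ρ.invariants W) :
    ∃ C, ∀ v ∈ W, v ∈ latticeInvariants ℓ r Γ ρ U → ‖v‖ ≤ C := by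
  let f : U → W →ₗ[ℚ_[ℓ]] Fin r → ℚ_[ℓ] := fun g => (ρ g - 1) ∘ₗ W.subtype
  have hf : ⨅ g, LinearMap.ker (f g) = ⊥ := by
    refine (Submodule.eq_bot_iff _).mpr fun v hv => ?_
    have hfix : ∀ g ∈ U, ρ g v = v := fun g hg => by
      simpa [f, sub_eq_zero] using (Submodule.mem_iInf _).mp hv ⟨g, hg⟩
    exact Subtype.ext (Submodule.disjoint_def.mp hW.disjoint v (hV v hfix) v.2)
  obtain ⟨C, hC⟩ := LinearMap.exists_norm_le_of_iInf_ker_eq_bot f hf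
  exact ⟨C, fun v hvW hvL => hC ⟨v, hvW⟩ fun g => by
    simpa [f] using (mem_latticeInvariants_iff ρ).mp hvL g g.2⟩

theorem exists_latticeInvariants_subset_closedBall_add {U : Subgroup Γ}
    (hV : ∀ v : Fin r → ℚ_[ℓ], (∀ g ∈ U, ρ g v = v) → ∀ g : Γ, ρ g v = v) : ∃ C,
      (latticeInvariants ℓ r Γ ρ U : Set (Fin r → ℚ_[ℓ])) ⊆
        closedBall 0 C + (latticeInvariants ℓ r Γ ρ ⊤ : Set (Fin r → ℚ_[ℓ])) := by
  obtain ⟨W, hW⟩ := ρ.invariants.exists_isCompl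
  obtain ⟨C, hC⟩ := exists_norm_le_of_mem_latticeInvariants ρ hV hW
  refine ⟨C, fun v hv => ?_⟩
  obtain ⟨u, hu, w, hw, rfl⟩ := Submodule.mem_sup.mp (hW.sup_eq_top ▸ Submodule.mem_top (x := v))
  have hwL : w ∈ latticeInvariants ℓ r Γ ρ U := by
    simpa using sub_mem hv (invariants_subset_latticeInvariants ρ U hu)
  exact ⟨w, mem_closedBall_zero_iff.mpr (hC w hw hwL), u,
    invariants_subset_latticeInvariants ρ ⊤ hu, add_comm w u⟩

end latticeInvariants

theorem finite_index_of_connected_invariants_general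
    (ℓ r : ℕ) [Fact ℓ.Prime]
    (Γ : Type*) [Group Γ] [TopologicalSpace Γ]
    (ρ : Representation ℚ_[ℓ] Γ (Fin r → ℚ_[ℓ]))
    (hlat : ∀ (g : Γ) (x : Fin r → ℚ_[ℓ]), (∀ i, ‖x i‖ ≤ 1) → ∀ i, ‖ρ g x i‖ ≤ 1)
    (hV : ∀ U : Subgroup Γ, IsOpen (U : Set Γ) →
      ∀ v : Fin r → ℚ_[ℓ], (∀ g ∈ U, ρ g v = v) → ∀ g : Γ, ρ g v = v) :
    ∀ U : Subgroup Γ, IsOpen (U : Set Γ) →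
      ((latticeInvariants ℓ r Γ ρ ⊤).addSubgroupOf (latticeInvariants ℓ r Γ ρ U)).index ≠ 0 := by
  intro U hU
  obtain ⟨C, hC⟩ := exists_latticeInvariants_subset_closedBall_add ρ (hV U hU)
  exact AddSubgroup.relIndex_ne_zero_of_subset_add (isOpen_latticeInvariants ρ hlat ⊤)
    (isCompact_closedBall 0 C) hC

/-- Let `Γ` be a profinite group, `ℓ` a prime, `T` a finitely generated free
`ℤ_ℓ`-module with a continuous `Γ`-action, `V = T ⊗ ℚ_ℓ` and `M = T ⊗ ℚ_ℓ/ℤ_ℓ`. Suppose that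
for every open subgroup `U ⊆ Γ` one has `V^U = V^Γ`. Then for every open subgroup `U ⊆ Γ`
the index `[M^U : M^Γ]` is finite.

`T` is realized as the unit-ball lattice in `V = ℚ_ℓ^r` (stabilized by the action), so that
`M^U` is the image of `latticeInvariants ρ U` in `M = V/T`, and the finiteness of
`[M^U : M^Γ]` is exactly the finiteness of the index of `latticeInvariants ρ ⊤` in
`latticeInvariants ρ U`. -/
theorem finite_index_of_connected_invariants
    (ℓ r : ℕ) [Fact ℓ.Prime]
    (Γ : Type*) [Group Γ] [TopologicalSpace Γ] [IsTopologicalGroup Γ]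
    [CompactSpace Γ] [TotallyDisconnectedSpace Γ]
    (ρ : Representation ℚ_[ℓ] Γ (Fin r → ℚ_[ℓ]))
    (hcont : Continuous fun p : Γ × (Fin r → ℚ_[ℓ]) => ρ p.1 p.2)
    (hlat : ∀ (g : Γ) (x : Fin r → ℚ_[ℓ]), (∀ i, ‖x i‖ ≤ 1) → ∀ i, ‖ρ g x i‖ ≤ 1)
    (hV : ∀ U : Subgroup Γ, IsOpen (U : Set Γ) →
      ∀ v : Fin r → ℚ_[ℓ], (∀ g ∈ U, ρ g v = v) → ∀ g : Γ, ρ g v = v) :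
    ∀ U : Subgroup Γ, IsOpen (U : Set Γ) →
      ((latticeInvariants ℓ r Γ ρ ⊤).addSubgroupOf (latticeInvariants ℓ r Γ ρ U)).index ≠ 0 :=
  finite_index_of_connected_invariants_general ℓ r Γ ρ hlat hV
end

section
/- Let Π be a profinite group, N ⊆ Π an open normal subgroup with |Π/N| = d, ℓ > d a prime, and T a finitely generated free ℤ_ℓ-module with a continuous Π-action. If (T/ℓT)^N = (T/ℓT)^Π, then (T/ℓⁿT)^N = (T/ℓⁿT)^Π for every integer n ≥ 1. -/
/-!
If `ρ g x ≡ x mod ℓⁿ` for every `g`, write `ρ g x - x = ℓⁿ c(g)`; since `ℓ` is regular on `T`,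
`c` is a 1-cocycle, and it vanishes mod `ℓ` on `N` when `x` is `N`-invariant mod `ℓⁿ⁺¹`.
Reduced mod `ℓ`, `c` then takes `N`-invariant, hence `Γ`-invariant values, so it is a
homomorphism modulo `ℓ` that kills `N`. As `g ^ [Γ : N] ∈ N`, this gives `[Γ : N] • c(g) ≡ 0`,
and `[Γ : N]` is a unit mod `ℓ` because `0 < [Γ : N] < ℓ`. Thus `c ≡ 0 mod ℓ`, i.e. `x` is
`Γ`-invariant mod `ℓⁿ⁺¹`.
-/

open Pointwise

theorem Submodule.mem_smul_top_iff_exists {R M : Type*} [CommRing R] [AddCommGroup M]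
    [Module R M] {a : R} {v : M} : v ∈ a • (⊤ : Submodule R M) ↔ ∃ y, v = a • y := by
  simp [mem_smul_pointwise_iff_exists, eq_comm]

theorem PadicInt.isUnit_natCast_of_lt {p : ℕ} [Fact p.Prime] {n : ℕ} (h0 : n ≠ 0)
    (hn : n < p) : IsUnit (n : ℤ_[p]) := by
  rw [PadicInt.isUnit_iff, PadicInt.norm_natCast_eq_one_iff]
  exact Nat.coprime_of_lt_prime h0 hn Fact.out

namespace Representation

open Submodule

variable {R G M : Type*} [CommRing R] [Group G] [AddCommGroup M] [Module R M]
  (ρ : Representation R G M)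

theorem cocycle_of_sub_eq_smul {a : R} (ha : IsSMulRegular M a) {x : M} {c : G → M}
    (hc : ∀ g, ρ g x - x = a • c g) (g h : G) : c (g * h) = ρ g (c h) + c g := by
  refine ha (show a • _ = a • _ from ?_)
  rw [← hc, smul_add, ← map_smul, ← hc, ← hc, map_mul, Module.End.mul_apply, map_sub]
  abel

section CocycleModSubmodule

variable {ρ} {P : Submodule R M} {c : G → M} (hc : ∀ g h, c (g * h) = ρ g (c h) + c g)
include hc

theorem cocycle_map_one : c 1 = 0 := by
  simpa [map_one] using hc 1 1

theorem cocycle_sub_mem_of_mem_normal (hP : ∀ g, ∀ v ∈ P, ρ g v ∈ P) {N : Subgroup G}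
    [N.Normal] (hcN : ∀ m ∈ N, c m ∈ P) {m : G} (hm : m ∈ N) (g : G) :
    ρ m (c g) - c g ∈ P := by
  have hconj : g⁻¹ * m * g ∈ N := by simpa using Subgroup.Normal.conj_mem ‹_› m hm g⁻¹
  have hmg : ρ m (c g) + c m = ρ g (c (g⁻¹ * m * g)) + c g := by
    rw [← hc, ← hc, show g * (g⁻¹ * m * g) = m * g by group]
  have : ρ m (c g) - c g = ρ g (c (g⁻¹ * m * g)) - c m := by
    rw [sub_eq_sub_iff_add_eq_add, hmg]
  rw [this]
  exact P.sub_mem (hP g _ (hcN _ hconj)) (hcN m hm)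

theorem cocycle_pow_sub_nsmul_mem (hinv : ∀ g h, ρ h (c g) - c g ∈ P) (g : G) (k : ℕ) :
    c (g ^ k) - k • c g ∈ P := by
  induction k with
  | zero => simp [cocycle_map_one hc]
  | succ k ih =>
    have : c (g ^ (k + 1)) - (k + 1) • c g =
        (ρ g (c (g ^ k)) - c (g ^ k)) + (c (g ^ k) - k • c g) := by
      rw [pow_succ', hc, add_nsmul, one_nsmul]
      abel
    rw [this]
    exact P.add_mem (hinv _ g) ih

theorem cocycle_mem_of_mem_normal (hP : ∀ g, ∀ v ∈ P, ρ g v ∈ P) (N : Subgroup G)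
    [N.Normal] (hfix : ∀ v, (∀ m ∈ N, ρ m v - v ∈ P) → ∀ g, ρ g v - v ∈ P)
    (hd : IsUnit (N.index : R)) (hcN : ∀ m ∈ N, c m ∈ P) (g : G) : c g ∈ P := by
  have hinv : ∀ g h, ρ h (c g) - c g ∈ P := fun g ↦
    hfix _ fun _ hm ↦ cocycle_sub_mem_of_mem_normal hc hP hcN hm g
  have hindex : N.index • c g ∈ P := by
    have := P.sub_mem (hcN _ (N.pow_index_mem g)) (cocycle_pow_sub_nsmul_mem hc hinv g N.index)
    rwa [sub_sub_cancel] at this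
  rwa [← Nat.cast_smul_eq_nsmul R, P.smul_mem_iff_of_isUnit hd] at hindex

end CocycleModSubmodule

theorem sub_mem_mul_smul_top {N : Subgroup G} [N.Normal] {a b : R} (ha : IsSMulRegular M a)
    (hfix : ∀ v : M, (∀ m ∈ N, ρ m v - v ∈ b • (⊤ : Submodule R M)) →
      ∀ g, ρ g v - v ∈ b • (⊤ : Submodule R M))
    (hd : IsUnit (N.index : R)) {x : M} (hx : ∀ g, ρ g x - x ∈ a • (⊤ : Submodule R M))
    (hxN : ∀ m ∈ N, ρ m x - x ∈ (a * b) • (⊤ : Submodule R M)) (g : G) :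
    ρ g x - x ∈ (a * b) • (⊤ : Submodule R M) := by
  simp only [mem_smul_top_iff_exists] at hx hxN ⊢
  choose c hc using hx
  have hcN : ∀ m ∈ N, c m ∈ b • (⊤ : Submodule R M) := fun m hm ↦ by
    obtain ⟨y, hy⟩ := hxN m hm
    exact mem_smul_top_iff_exists.2 ⟨y, ha (show a • _ = a • _ by rw [← hc, hy, mul_smul])⟩
  have hP : ∀ g, ∀ v ∈ b • (⊤ : Submodule R M), ρ g v ∈ b • (⊤ : Submodule R M) := by
    simp only [mem_smul_top_iff_exists]
    rintro g _ ⟨y, rfl⟩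
    exact ⟨ρ g y, map_smul _ _ _⟩
  obtain ⟨z, hz⟩ := mem_smul_top_iff_exists.1 <|
    cocycle_mem_of_mem_normal (cocycle_of_sub_eq_smul ρ ha hc) hP N hfix hd hcN g
  exact ⟨z, by rw [hc, hz, mul_smul]⟩

end Representation

theorem invariants_mod_elln_eq_of_invariants_mod_ell_general
    (ℓ d r : ℕ) [Fact ℓ.Prime] (hℓd : d < ℓ)
    (Γ : Type*) [Group Γ] [TopologicalSpace Γ] [IsTopologicalGroup Γ]
    [CompactSpace Γ]
    (N : Subgroup Γ) [N.Normal] (hNopen : IsOpen (N : Set Γ)) (hNd : N.index = d)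
    (ρ : Representation ℤ_[ℓ] Γ (Fin r → ℤ_[ℓ]))
    (h1 : ∀ x : Fin r → ℤ_[ℓ],
      (∀ g ∈ N, ∃ y, ρ g x - x = (ℓ : ℤ_[ℓ]) • y) →
      ∀ g : Γ, ∃ y, ρ g x - x = (ℓ : ℤ_[ℓ]) • y) :
    ∀ n : ℕ, 1 ≤ n → ∀ x : Fin r → ℤ_[ℓ],
      (∀ g ∈ N, ∃ y, ρ g x - x = ((ℓ : ℤ_[ℓ]) ^ n) • y) →
      ∀ g : Γ, ∃ y, ρ g x - x = ((ℓ : ℤ_[ℓ]) ^ n) • y := by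
  have hℓ : IsSMulRegular (Fin r → ℤ_[ℓ]) (ℓ : ℤ_[ℓ]) :=
    .of_ne_zero (Nat.cast_ne_zero.2 (Fact.out : ℓ.Prime).ne_zero)
  have : Finite (Γ ⧸ N) := N.quotient_finite_of_isOpen hNopen
  have hd : IsUnit (N.index : ℤ_[ℓ]) :=
    PadicInt.isUnit_natCast_of_lt Subgroup.index_ne_zero_of_finite (hNd ▸ hℓd)
  simp only [← Submodule.mem_smul_top_iff_exists] at h1 ⊢
  intro n hn
  induction n, hn using Nat.le_induction with
  | base => simpa using h1
  | succ n _ ih =>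
    intro x hx
    rw [pow_succ] at hx ⊢
    have hle : ((ℓ : ℤ_[ℓ]) ^ n * ℓ) • (⊤ : Submodule ℤ_[ℓ] (Fin r → ℤ_[ℓ])) ≤
        (ℓ : ℤ_[ℓ]) ^ n • ⊤ := by
      rw [mul_smul]
      exact smul_le_smul_left _ le_top
    exact ρ.sub_mem_mul_smul_top (hℓ.pow n) h1 hd (ih x fun m hm ↦ hle (hx m hm)) hx

/-- Let `Γ` be a profinite group, `N ⊆ Γ` an open normal subgroup with
`|Γ/N| = d`, `ℓ > d` a prime, and `T = ℤ_ℓ^r` a finitely generated free `ℤ_ℓ`-module with a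
continuous `Γ`-action `ρ`. If `(T/ℓT)^N = (T/ℓT)^Γ`, then `(T/ℓⁿT)^N = (T/ℓⁿT)^Γ` for every
`n ≥ 1`. (The invariance of the class of `x` in `T/ℓⁿT` under `g` is expressed,
quotient-freely, as `ρ g x - x ∈ ℓⁿT`.) -/
theorem invariants_mod_elln_eq_of_invariants_mod_ell
    (ℓ d r : ℕ) [Fact ℓ.Prime] (hℓd : d < ℓ)
    (Γ : Type*) [Group Γ] [TopologicalSpace Γ] [IsTopologicalGroup Γ]
    [CompactSpace Γ] [TotallyDisconnectedSpace Γ]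
    (N : Subgroup Γ) [N.Normal] (hNopen : IsOpen (N : Set Γ)) (hNd : N.index = d)
    (ρ : Representation ℤ_[ℓ] Γ (Fin r → ℤ_[ℓ]))
    (hcont : Continuous fun p : Γ × (Fin r → ℤ_[ℓ]) => ρ p.1 p.2)
    (h1 : ∀ x : Fin r → ℤ_[ℓ],
      (∀ g ∈ N, ∃ y, ρ g x - x = (ℓ : ℤ_[ℓ]) • y) →
      ∀ g : Γ, ∃ y, ρ g x - x = (ℓ : ℤ_[ℓ]) • y) :
    ∀ n : ℕ, 1 ≤ n → ∀ x : Fin r → ℤ_[ℓ],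
      (∀ g ∈ N, ∃ y, ρ g x - x = ((ℓ : ℤ_[ℓ]) ^ n) • y) →
      ∀ g : Γ, ∃ y, ρ g x - x = ((ℓ : ℤ_[ℓ]) ^ n) • y :=
  invariants_mod_elln_eq_of_invariants_mod_ell_general ℓ d r hℓd Γ N hNopen hNd ρ h1
end

section
/- Let Π be a profinite group, N ⊆ Π an open normal subgroup of index d, ℓ > d a prime, and T a finitely generated free ℤ_ℓ-module with a continuous Π-action such that (T/ℓT)^N = (T/ℓT)^Π. Then, setting M = T ⊗ ℚ_ℓ/ℤ_ℓ, one has M^N = M^Π. -/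
/-!
Let `T` be the unit ball and induct on the denominator of `v`. If `ℓ ^ (n + 1) • v ∈ T`, the
induction hypothesis for `ℓ • v` puts every `ρ g v - v` into `ℓ⁻¹ • T`. As `N` is normal, each
`ρ g v - v` is again `N`-fixed modulo `T`, so the hypothesis mod `ℓ`, applied to
`ℓ • (ρ g v - v) ∈ T`, makes it `Γ`-fixed modulo `T`. Then `g ↦ ρ g v - v` is a homomorphism
into `M` killing `N`, hence `d • (ρ g v - v) ≡ ρ (g ^ d) v - v ≡ 0`, and `d` is a unit of `ℤ_ℓ`
because `d < ℓ`.
-/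

open IsUltrametricDist

theorem IsUltrametricDist.norm_sub_le_max {E : Type*} [SeminormedAddGroup E] [IsUltrametricDist E]
    (x y : E) : ‖x - y‖ ≤ max ‖x‖ ‖y‖ := by
  simpa [sub_eq_add_neg] using norm_add_le_max x (-y)

theorem norm_map_pow_sub_nsmul_le {M E : Type*} [Monoid M] [SeminormedAddCommGroup E]
    [IsUltrametricDist E] {f : M → E} {c : ℝ} (hf : ∀ g h, ‖f (g * h) - f g - f h‖ ≤ c)
    (g : M) (k : ℕ) : ‖f (g ^ k) - k • f g‖ ≤ c := by
  induction k with
  | zero => simpa [sub_sub] using hf 1 1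
  | succ k ih =>
    calc ‖f (g ^ (k + 1)) - (k + 1) • f g‖
        = ‖(f (g ^ k * g) - f (g ^ k) - f g) + (f (g ^ k) - k • f g)‖ := by
          rw [pow_succ, succ_nsmul]; abel_nf
      _ ≤ c := (norm_add_le_max _ _).trans (max_le (hf _ _) ih)

namespace Representation

variable {K G V : Type*} [NormedField K] [Group G] [SeminormedAddCommGroup V] [NormedSpace K V]
  (ρ : Representation K G V)

def IsFixedModBall (H : Subgroup G) (c : ℝ) (v : V) : Prop :=
  ∀ g ∈ H, ‖ρ g v - v‖ ≤ c

variable {ρ}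

theorem IsFixedModBall.mono {H : Subgroup G} {c c' : ℝ} {v : V} (hv : ρ.IsFixedModBall H c v)
    (hc : c ≤ c') : ρ.IsFixedModBall H c' v :=
  fun g hg => (hv g hg).trans hc

theorem map_mul_apply_sub_self (g h : G) (v : V) :
    ρ (g * h) v - v = ρ g (ρ h v - v) + (ρ g v - v) := by
  rw [map_mul, Module.End.mul_apply, map_sub]; abel

theorem isFixedModBall_smul_iff {H : Subgroup G} {c : ℝ} {v : V} {a : K} (ha : a ≠ 0) :
    ρ.IsFixedModBall H (‖a‖ * c) (a • v) ↔ ρ.IsFixedModBall H c v := by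
  refine forall₂_congr fun g _ => ?_
  rw [map_smul, ← smul_sub, norm_smul, mul_le_mul_iff_right₀ (norm_pos_iff.mpr ha)]

variable [IsUltrametricDist V]

theorem isFixedModBall_of_norm_le_one (hT : ∀ g x, ‖x‖ ≤ 1 → ‖ρ g x‖ ≤ 1) (H : Subgroup G)
    {v : V} (hv : ‖v‖ ≤ 1) : ρ.IsFixedModBall H 1 v := fun g _ =>
  (norm_sub_le_max _ _).trans (max_le (hT g v hv) hv)

theorem IsFixedModBall.map_sub_self (hT : ∀ g x, ‖x‖ ≤ 1 → ‖ρ g x‖ ≤ 1) {N : Subgroup G}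
    [N.Normal] {v : V} (hv : ρ.IsFixedModBall N 1 v) (g : G) :
    ρ.IsFixedModBall N 1 (ρ g v - v) := by
  intro h hh
  have hconj : ρ h (ρ g v - v) - (ρ g v - v) = ρ g (ρ (g⁻¹ * h * g) v - v) - (ρ h v - v) := by
    have key := map_mul_apply_sub_self (ρ := ρ) h g v
    rw [show h * g = g * (g⁻¹ * h * g) by group, map_mul_apply_sub_self] at key
    rw [sub_eq_sub_iff_add_eq_add, ← key]
  rw [hconj]
  exact (norm_sub_le_max _ _).trans
    (max_le (hT g _ (hv _ (Subgroup.Normal.conj_mem' ‹_› h hh g))) (hv h hh))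

theorem isFixedModBall_top_of_map_sub_self {N : Subgroup G} [N.Normal] {v : V}
    (hd : ‖(N.index : K)‖ = 1) (hv : ρ.IsFixedModBall N 1 v)
    (hE : ∀ g, ρ.IsFixedModBall ⊤ 1 (ρ g v - v)) : ρ.IsFixedModBall ⊤ 1 v := by
  intro g _
  have hquasi : ∀ g h, ‖(ρ (g * h) v - v) - (ρ g v - v) - (ρ h v - v)‖ ≤ 1 := fun g h => by
    rw [map_mul_apply_sub_self, add_sub_cancel_right]
    exact hE h g (Subgroup.mem_top g)
  have hpow := norm_map_pow_sub_nsmul_le (f := fun g => ρ g v - v) hquasi g N.index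
  calc ‖ρ g v - v‖ = ‖(N.index : K) • (ρ g v - v)‖ := by rw [norm_smul, hd, one_mul]
    _ = ‖(ρ (g ^ N.index) v - v) - ((ρ (g ^ N.index) v - v) - N.index • (ρ g v - v))‖ := by
        rw [sub_sub_cancel, Nat.cast_smul_eq_nsmul]
    _ ≤ 1 := (norm_sub_le_max _ _).trans (max_le (hv _ (N.pow_index_mem g)) hpow)

theorem isFixedModBall_top_of_isFixedModBall (hT : ∀ g x, ‖x‖ ≤ 1 → ‖ρ g x‖ ≤ 1)
    {N : Subgroup G} [N.Normal] (hd : ‖(N.index : K)‖ = 1) {ϖ : K} (hϖ0 : ϖ ≠ 0) (hϖ1 : ‖ϖ‖ < 1)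
    (hmod : ∀ x, ‖x‖ ≤ 1 → ρ.IsFixedModBall N ‖ϖ‖ x → ρ.IsFixedModBall ⊤ ‖ϖ‖ x) {v : V}
    (hv : ρ.IsFixedModBall N 1 v) : ρ.IsFixedModBall ⊤ 1 v := by
  obtain ⟨n, hn⟩ := pow_unbounded_of_one_lt ‖v‖ ((one_lt_inv₀ (norm_pos_iff.2 hϖ0)).2 hϖ1)
  induction n generalizing v with
  | zero => exact isFixedModBall_of_norm_le_one hT ⊤ (by simpa using hn.le)
  | succ n ih =>
    have hϖv : ρ.IsFixedModBall ⊤ 1 (ϖ • v) := by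
      refine ih (((isFixedModBall_smul_iff hϖ0).2 hv).mono ((mul_one _).trans_le hϖ1.le)) ?_
      calc ‖ϖ • v‖ = ‖ϖ‖ * ‖v‖ := norm_smul _ _
        _ < ‖ϖ‖ * ‖ϖ‖⁻¹ ^ (n + 1) := mul_lt_mul_of_pos_left hn (norm_pos_iff.2 hϖ0)
        _ = ‖ϖ‖⁻¹ ^ n := by
          rw [pow_succ', ← mul_assoc, mul_inv_cancel₀ (norm_ne_zero_iff.2 hϖ0), one_mul]
    refine isFixedModBall_top_of_map_sub_self hd hv fun g => ?_
    have hcoboundary : ‖ϖ • (ρ g v - v)‖ ≤ 1 := by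
      rw [smul_sub, ← map_smul]; exact hϖv g (Subgroup.mem_top g)
    have hN := (isFixedModBall_smul_iff hϖ0).2 (hv.map_sub_self hT g)
    refine (isFixedModBall_smul_iff hϖ0).1 ?_
    rw [mul_one] at hN ⊢
    exact hmod _ hcoboundary hN

end Representation

theorem divisible_invariants_eq_of_invariants_mod_ell_general
    (ℓ d r : ℕ) [Fact ℓ.Prime] (hℓd : d < ℓ)
    (Γ : Type*) [Group Γ] [TopologicalSpace Γ] [IsTopologicalGroup Γ]
    [CompactSpace Γ]
    (N : Subgroup Γ) [N.Normal] (hNopen : IsOpen (N : Set Γ)) (hNd : N.index = d)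
    (ρ : Representation ℚ_[ℓ] Γ (Fin r → ℚ_[ℓ]))
    (hlat : ∀ (g : Γ) (x : Fin r → ℚ_[ℓ]), (∀ i, ‖x i‖ ≤ 1) → ∀ i, ‖ρ g x i‖ ≤ 1)
    (hmodℓ : ∀ x : Fin r → ℚ_[ℓ], (∀ i, ‖x i‖ ≤ 1) →
      (∀ g ∈ N, ∀ i, ‖(ρ g x - x) i‖ ≤ ((ℓ : ℝ))⁻¹) →
      ∀ g : Γ, ∀ i, ‖(ρ g x - x) i‖ ≤ ((ℓ : ℝ))⁻¹) :
    ∀ v : Fin r → ℚ_[ℓ],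
      (∀ g ∈ N, ∀ i, ‖(ρ g v - v) i‖ ≤ 1) →
      ∀ g : Γ, ∀ i, ‖(ρ g v - v) i‖ ≤ 1 := by
  have : Finite (Γ ⧸ N) := Subgroup.quotient_finite_of_isOpen N hNopen
  have hd : ‖(N.index : ℚ_[ℓ])‖ = 1 := by
    rw [hNd, Padic.norm_natCast_eq_one_iff]
    exact Nat.coprime_of_lt_prime (hNd ▸ Subgroup.index_ne_zero_of_finite) hℓd Fact.out
  have hℓ1 : ‖(ℓ : ℚ_[ℓ])‖ < 1 := by
    rw [Padic.norm_p]; exact inv_lt_one_of_one_lt₀ (mod_cast (Fact.out : ℓ.Prime).one_lt)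
  have hℓ0 : (ℓ : ℚ_[ℓ]) ≠ 0 := by simp [(Fact.out : ℓ.Prime).ne_zero]
  simp only [← pi_norm_le_iff_of_nonneg zero_le_one,
    ← pi_norm_le_iff_of_nonneg (inv_nonneg.2 (Nat.cast_nonneg ℓ))] at hlat hmodℓ ⊢
  intro v hv g
  refine Representation.isFixedModBall_top_of_isFixedModBall hlat hd hℓ0 hℓ1 ?_ hv g (Subgroup.mem_top g)
  simpa only [Representation.IsFixedModBall, Padic.norm_p, Subgroup.mem_top, forall_const] using hmodℓ

/-- Let `Γ` be a profinite group, `N ⊆ Γ` an open normal subgroup of index `d`,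
`ℓ > d` a prime, and `T` a finitely generated free `ℤ_ℓ`-module with a continuous `Γ`-action
such that `(T/ℓT)^N = (T/ℓT)^Γ`. Then, setting `M = T ⊗ ℚ_ℓ/ℤ_ℓ`, one has `M^N = M^Γ`.

Here `T` is realized as the unit-ball lattice `{v : ℚ_ℓ^r | ∀ i, ‖v i‖ ≤ 1}` inside
`V = ℚ_ℓ^r`, with `ρ` a continuous action on `V` stabilizing the lattice; `M = V/T`, and
invariance of the class of `v` in `M` under `g` is expressed, quotient-freely, as
`ρ g v - v ∈ T`. -/
theorem divisible_invariants_eq_of_invariants_mod_ell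
    (ℓ d r : ℕ) [Fact ℓ.Prime] (hℓd : d < ℓ)
    (Γ : Type*) [Group Γ] [TopologicalSpace Γ] [IsTopologicalGroup Γ]
    [CompactSpace Γ] [TotallyDisconnectedSpace Γ]
    (N : Subgroup Γ) [N.Normal] (hNopen : IsOpen (N : Set Γ)) (hNd : N.index = d)
    (ρ : Representation ℚ_[ℓ] Γ (Fin r → ℚ_[ℓ]))
    (hcont : Continuous fun p : Γ × (Fin r → ℚ_[ℓ]) => ρ p.1 p.2)
    (hlat : ∀ (g : Γ) (x : Fin r → ℚ_[ℓ]), (∀ i, ‖x i‖ ≤ 1) → ∀ i, ‖ρ g x i‖ ≤ 1)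
    (hmodℓ : ∀ x : Fin r → ℚ_[ℓ], (∀ i, ‖x i‖ ≤ 1) →
      (∀ g ∈ N, ∀ i, ‖(ρ g x - x) i‖ ≤ ((ℓ : ℝ))⁻¹) →
      ∀ g : Γ, ∀ i, ‖(ρ g x - x) i‖ ≤ ((ℓ : ℝ))⁻¹) :
    ∀ v : Fin r → ℚ_[ℓ],
      (∀ g ∈ N, ∀ i, ‖(ρ g v - v) i‖ ≤ 1) →
      ∀ g : Γ, ∀ i, ‖(ρ g v - v) i‖ ≤ 1 :=
  divisible_invariants_eq_of_invariants_mod_ell_general ℓ d r hℓd Γ N hNopen hNd ρ hlat hmodℓ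
end

section
/- Let k be a field with absolute Galois group π₁(k), ℓ a prime invertible in k, and T, U two finitely generated free ℤ_ℓ-modules with continuous π₁(k)-actions. Suppose there exists a finite extension k ⊆ k_ℓ and a π₁(k_ℓ)-equivariant isomorphism T ≅ U, and suppose that the Zariski closure of the image of π₁(k) acting on H ⊗ ℚ_ℓ is connected, where H = T^∨ ⊗ U. Then there exists a π₁(k)-equivariant isomorphism T ≅ U. -/
noncomputable section
open Matrix

/-- The Zariski topology on the space of square matrices over `K`: the topology generated by
the basic open sets `{M | p(M) ≠ 0}` for polynomials `p` in the matrix entries. -/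
def zariskiMat (n : Type*) [Fintype n] (K : Type*) [CommRing K] :
    TopologicalSpace (Matrix n n K) :=
  TopologicalSpace.generateFrom
    {U | ∃ p : MvPolynomial (n × n) K,
      U = {M : Matrix n n K | MvPolynomial.eval (fun q => M q.1 q.2) p ≠ 0}}

/-- The Zariski topology on the algebraic group `GL_n(K)`, induced by the closed embedding
`g ↦ (g, g⁻¹)` into matrix pairs. -/
def zariskiGL (n : Type*) [Fintype n] [DecidableEq n] (K : Type*) [CommRing K] :
    TopologicalSpace (GL n K) :=
  TopologicalSpace.induced
    (fun g => (((g : GL n K) : Matrix n n K), ((g⁻¹ : GL n K) : Matrix n n K)))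
    (@instTopologicalSpaceProd _ _ (zariskiMat n K) (zariskiMat n K))

variable {n : Type*} [Fintype n] [DecidableEq n] {K : Type*} [CommRing K]

/-- Zariski closure in `GL_n(K)`. -/
def zClosure (S : Set (GL n K)) : Set (GL n K) := @closure _ (zariskiGL n K) S

/-- Zariski connectedness in `GL_n(K)`. -/
def zIsConnected (S : Set (GL n K)) : Prop := @IsConnected _ (zariskiGL n K) S

/-- Zariski closedness in `GL_n(K)`. -/
def zIsClosed (S : Set (GL n K)) : Prop := @IsClosed _ (zariskiGL n K) S

/-- The connected component of `g` inside `S ⊆ GL_n(K)`, for the Zariski topology; for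
`g = 1` and `S = G` an algebraic subgroup this is the neutral component `G⁰`. -/
def zComponentIn (S : Set (GL n K)) (g : GL n K) : Set (GL n K) :=
  @connectedComponentIn _ (zariskiGL n K) S g

/-- The set `π₀` of connected components of a subset of `GL_n(K)` in the Zariski topology. -/
def zPi0 (S : Set (GL n K)) : Type _ :=
  @ConnectedComponents S (TopologicalSpace.induced Subtype.val (zariskiGL n K))

open Kronecker

/-- The element of `GL_{r²}(K)` giving the conjugation action `A ↦ P A Q⁻¹` on `r × r`
matrices (`Hom(T, U) = T^∨ ⊗ U`), namely `P ⊗ (Q⁻¹)ᵀ`. -/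
def conjGL {K : Type*} [CommRing K] {r : ℕ} (P Q : GL (Fin r) K) :
    GL (Fin r × Fin r) K where
  val := ((P : Matrix (Fin r) (Fin r) K)) ⊗ₖ (((Q⁻¹ : GL (Fin r) K) : Matrix (Fin r) (Fin r) K))ᵀ
  inv := (((P⁻¹ : GL (Fin r) K) : Matrix (Fin r) (Fin r) K)) ⊗ₖ ((Q : Matrix (Fin r) (Fin r) K))ᵀ
  val_inv := by
    rw [← Matrix.mul_kronecker_mul, ← Matrix.transpose_mul]
    simp
  inv_val := by
    rw [← Matrix.mul_kronecker_mul, ← Matrix.transpose_mul]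
    simp

/-- The inclusion `GL_r(ℤ_ℓ) → GL_r(ℚ_ℓ)`. -/
def glPadicIncl (ℓ r : ℕ) [Fact ℓ.Prime] : GL (Fin r) ℤ_[ℓ] →* GL (Fin r) ℚ_[ℓ] :=
  Units.map (((PadicInt.Coe.ringHom (p := ℓ)).mapMatrix :
    Matrix (Fin r) (Fin r) ℤ_[ℓ] →+* Matrix (Fin r) (Fin r) ℚ_[ℓ])).toMonoidHom

/-!
Let `φ` be the action of `π₁(k)` on `H ⊗ ℚ_ℓ` and `N` the finite-index subgroup fixing `k_ℓ`.
Translations and inversion are Zariski homeomorphisms of `GL`, so the Zariski closure `D` of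
`φ(N)` is a closed subgroup, and the closure of `φ(π₁(k))` is covered by the finitely many
translates `φ(g) D`, which are equal to `D` or disjoint from it. Connectedness forces the whole
closure into `D`. Since `ψ`, as a vector of `H ⊗ ℚ_ℓ`, is fixed by `φ(N)` and its stabilizer is
Zariski closed, it is fixed by all of `φ(π₁(k))`; as `ℤ_ℓ ⊆ ℚ_ℓ`, this is `π₁(k)`-equivariance
of `ψ` itself.
-/

section ZariskiTopology

open MvPolynomial Topology

variable {m : Type*} [Fintype m]

theorem isOpen_zariskiMat_eval_ne_zero (p : MvPolynomial (m × m) K) :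
    IsOpen[zariskiMat m K] {M | eval (fun q => M q.1 q.2) p ≠ 0} :=
  TopologicalSpace.isOpen_generateFrom_of_mem ⟨p, rfl⟩

theorem isClosed_zariskiMat_eval_eq_zero (p : MvPolynomial (m × m) K) :
    IsClosed[zariskiMat m K] {M | eval (fun q => M q.1 q.2) p = 0} := by
  let := zariskiMat m K
  exact isOpen_compl_iff.1 <| by
    simpa only [Set.compl_ofPred] using isOpen_zariskiMat_eval_ne_zero p

theorem continuous_zariskiMat_of_eval {m' : Type*} [Fintype m']
    (f : Matrix m m K → Matrix m' m' K) (P : m' × m' → MvPolynomial (m × m) K)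
    (hf : ∀ M q, f M q.1 q.2 = eval (fun q => M q.1 q.2) (P q)) :
    Continuous[zariskiMat m K, zariskiMat m' K] f := by
  refine continuous_generateFrom_iff.2 ?_
  rintro _ ⟨p, rfl⟩
  convert isOpen_zariskiMat_eval_ne_zero (bind₁ P p) using 1
  ext M
  simp only [Set.mem_preimage, Set.mem_ofPred_eq, hf]
  exact Iff.of_eq (congrArg (· ≠ 0) (eval₂Hom_bind₁ (RingHom.id K) _ P p).symm)

theorem continuous_zariskiMat_const_mul (A : Matrix m m K) :
    Continuous[zariskiMat m K, zariskiMat m K] fun M : Matrix m m K => A * M :=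
  continuous_zariskiMat_of_eval _ (fun q => ∑ j, C (A q.1 j) * X (j, q.2))
    fun M q => by simp [Matrix.mul_apply]

theorem continuous_zariskiMat_mul_const (A : Matrix m m K) :
    Continuous[zariskiMat m K, zariskiMat m K] fun M : Matrix m m K => M * A :=
  continuous_zariskiMat_of_eval _ (fun q => ∑ j, X (q.1, j) * C (A j q.2))
    fun M q => by simp [Matrix.mul_apply]

theorem isClosed_zariskiMat_setOf_mulVec_eq (v : m → K) :
    IsClosed[zariskiMat m K] {M : Matrix m m K | M *ᵥ v = v} := by
  let := zariskiMat m K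
  have : {M : Matrix m m K | M *ᵥ v = v} =
      ⋂ i, {M | eval (fun q => M q.1 q.2) (∑ j, X (i, j) * C (v j) - C (v i)) = 0} := by
    ext M
    simp [_root_.funext_iff, Matrix.mulVec, dotProduct, sub_eq_zero]
  rw [this]
  exact isClosed_iInter fun i => isClosed_zariskiMat_eval_eq_zero _

theorem continuous_zariskiGL_val :
    Continuous[zariskiGL n K, zariskiMat n K] fun g : GL n K => (g : Matrix n n K) := by
  let := zariskiMat n K
  let := zariskiGL n K
  exact continuous_fst.comp (continuous_induced_dom
    (f := fun g : GL n K => ((g : Matrix n n K), ((g⁻¹ : GL n K) : Matrix n n K))))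

theorem continuous_zariskiGL_val_inv :
    Continuous[zariskiGL n K, zariskiMat n K] fun g : GL n K => (↑g⁻¹ : Matrix n n K) := by
  let := zariskiMat n K
  let := zariskiGL n K
  exact continuous_snd.comp (continuous_induced_dom
    (f := fun g : GL n K => ((g : Matrix n n K), ((g⁻¹ : GL n K) : Matrix n n K))))

theorem continuous_zariskiGL_of_val {f : GL n K → GL n K}
    (hf : Continuous[zariskiGL n K, zariskiMat n K] fun g => (f g : Matrix n n K))
    (hf' : Continuous[zariskiGL n K, zariskiMat n K] fun g => (((f g)⁻¹ : GL n K) : Matrix n n K)) :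
    Continuous[zariskiGL n K, zariskiGL n K] f := by
  let := zariskiMat n K
  let := zariskiGL n K
  exact continuous_induced_rng.2 (hf.prodMk hf')

theorem separatelyContinuousMul_zariskiGL :
    @SeparatelyContinuousMul (GL n K) (zariskiGL n K) _ := by
  let := zariskiMat n K
  let := zariskiGL n K
  refine ⟨continuous_zariskiGL_of_val ?_ ?_, continuous_zariskiGL_of_val ?_ ?_⟩
  · exact (continuous_zariskiMat_const_mul _).comp continuous_zariskiGL_val
  · simp only [_root_.mul_inv_rev, Units.val_mul]
    exact (continuous_zariskiMat_mul_const _).comp continuous_zariskiGL_val_inv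
  · exact (continuous_zariskiMat_mul_const _).comp continuous_zariskiGL_val
  · simp only [_root_.mul_inv_rev, Units.val_mul]
    exact (continuous_zariskiMat_const_mul _).comp continuous_zariskiGL_val_inv

theorem continuousInv_zariskiGL : @ContinuousInv (GL n K) (zariskiGL n K) _ := by
  let := zariskiGL n K
  exact ⟨continuous_zariskiGL_of_val continuous_zariskiGL_val_inv
    (by simpa only [inv_inv] using continuous_zariskiGL_val)⟩

theorem isClosed_zariskiGL_setOf_mulVec_eq (v : n → K) :
    IsClosed[zariskiGL n K] {g : GL n K | (g : Matrix n n K) *ᵥ v = v} := by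
  let := zariskiMat n K
  let := zariskiGL n K
  exact (isClosed_zariskiMat_setOf_mulVec_eq v).preimage continuous_zariskiGL_val

end ZariskiTopology

section SeparatelyContinuous

open Set Pointwise

variable {G : Type*} [Group G] [TopologicalSpace G] [SeparatelyContinuousMul G] [ContinuousInv G]

/-- `Subgroup.topologicalClosure` without joint continuity of multiplication, which fails for
Zariski topologies. -/
def Subgroup.closureOfSeparatelyContinuous (H : Subgroup G) : Subgroup G where
  carrier := _root_.closure H
  mul_mem' ha hb := H.toSubmonoid.top_closure_mul_self_subset (mul_mem_mul ha hb)
  one_mem' := _root_.subset_closure H.one_mem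
  inv_mem' {a} ha := by
    show a⁻¹ ∈ _root_.closure (H : Set G)
    rwa [← mem_inv, inv_closure, inv_coe_set]

theorem MonoidHom.closure_range_subset_closure_image_of_isPreconnected {Γ : Type*} [Group Γ]
    (φ : Γ →* G) (N : Subgroup Γ) [N.FiniteIndex] (hφ : IsPreconnected (closure (Set.range φ))) :
    closure (Set.range φ) ⊆ closure (φ '' N) := by
  set D := (N.map φ).closureOfSeparatelyContinuous
  have mem_iff : ∀ a, ∀ x ∈ a • (D : Set G), x ∈ D ↔ a ∈ D := fun a x hx => by
    simpa only [mul_inv_cancel_left] using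
      D.mul_mem_cancel_right (y := a) ((mem_leftCoset_iff a).1 hx)
  have hD : IsClosed (D : Set G) := isClosed_closure
  set rep : Γ ⧸ N → G := fun q => φ q.out
  have hcover : closure (Set.range φ) ⊆ ⋃ q, rep q • (D : Set G) := by
    refine closure_minimal ?_ (isClosed_iUnion_of_finite fun q => hD.leftCoset _)
    rintro _ ⟨γ, rfl⟩
    obtain ⟨h, hh⟩ := QuotientGroup.mk_out_eq_mul N γ
    refine mem_iUnion.2 ⟨γ, (mem_leftCoset_iff _).2 (subset_closure ⟨h⁻¹, N.inv_mem h.2, ?_⟩)⟩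
    simp [rep, hh]
  set B := ⋃ q : {q // rep q ∉ D}, rep q • (D : Set G)
  have hDB : ∀ x ∈ D, x ∉ B := fun x hx hB => by
    obtain ⟨q, hq⟩ := mem_iUnion.1 hB
    exact q.2 ((mem_iff _ x hq).1 hx)
  have hsplit : closure (Set.range φ) ⊆ D ∪ B := fun x hx => by
    obtain ⟨q, hq⟩ := mem_iUnion.1 (hcover hx)
    by_cases hqD : rep q ∈ D
    · exact Or.inl ((mem_iff _ x hq).2 hqD)
    · exact Or.inr (mem_iUnion.2 ⟨⟨q, hqD⟩, hq⟩)
  have hdisj : closure (Set.range φ) ∩ (D ∩ B) = ∅ :=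
    eq_empty_of_forall_notMem fun x ⟨_, hD, hB⟩ => hDB x hD hB
  refine (isPreconnected_iff_subset_of_disjoint_closed.1 hφ D B hD
    (isClosed_iUnion_of_finite fun q => hD.leftCoset _) hsplit hdisj).resolve_right fun h => ?_
  exact hDB 1 D.one_mem (h (subset_closure ⟨1, map_one φ⟩))

end SeparatelyContinuous

theorem IntermediateField.restrict_eq_iff_inv_mul_mem_fixingSubgroup {F L : Type*} [Field F]
    [Field L] [Algebra F L] (E : IntermediateField F L) (σ τ : L ≃ₐ[F] L) :
    (σ : L →ₐ[F] L).comp E.val = (τ : L →ₐ[F] L).comp E.val ↔ σ⁻¹ * τ ∈ E.fixingSubgroup := by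
  simp only [AlgHom.ext_iff, mem_fixingSubgroup_iff, AlgEquiv.mul_apply, AlgEquiv.aut_inv,
    AlgEquiv.symm_apply_eq, AlgHom.comp_apply, IntermediateField.val_mk, Subtype.forall]
  exact forall₂_congr fun _ _ => eq_comm

theorem IntermediateField.finiteIndex_fixingSubgroup {F L : Type*} [Field F] [Field L]
    [Algebra F L] (E : IntermediateField F L) [FiniteDimensional F E] :
    E.fixingSubgroup.FiniteIndex := by
  let res : (L ≃ₐ[F] L) ⧸ E.fixingSubgroup → (E →ₐ[F] L) :=
    Quotient.lift (fun σ => (σ : L →ₐ[F] L).comp E.val) fun σ τ h =>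
      (E.restrict_eq_iff_inv_mul_mem_fixingSubgroup σ τ).2 (QuotientGroup.leftRel_apply.1 h)
  have hres : Function.Injective res := by
    rintro ⟨σ⟩ ⟨τ⟩ h
    exact QuotientGroup.eq.2 ((E.restrict_eq_iff_inv_mul_mem_fixingSubgroup σ τ).1 h)
  have := Finite.of_injective res hres
  exact Subgroup.finiteIndex_of_finite_quotient

section ConjugationAction

variable {r : ℕ}

theorem conjGL_mul (P₁ P₂ Q₁ Q₂ : GL (Fin r) K) :
    conjGL (P₁ * P₂) (Q₁ * Q₂) = conjGL P₁ Q₁ * conjGL P₂ Q₂ :=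
  Units.ext <| by simp [conjGL, ← mul_kronecker_mul, transpose_mul]

variable (K r) in
def conjGLHom : GL (Fin r) K × GL (Fin r) K →* GL (Fin r × Fin r) K :=
  MonoidHom.mk' (fun PQ => conjGL PQ.1 PQ.2) fun _ _ => conjGL_mul _ _ _ _

theorem conjGL_mulVec_vec_transpose (P Q : GL (Fin r) K) (M : Matrix (Fin r) (Fin r) K) :
    (conjGL P Q : Matrix (Fin r × Fin r) (Fin r × Fin r) K) *ᵥ vec Mᵀ =
      vec ((P : Matrix (Fin r) (Fin r) K) * M *
        ((Q⁻¹ : GL (Fin r) K) : Matrix (Fin r) (Fin r) K))ᵀ := by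
  simp [conjGL, kronecker_mulVec_vec, transpose_mul, Matrix.mul_assoc]

theorem conjGL_mulVec_vec_transpose_eq_self_iff (P Q M : GL (Fin r) K) :
    (conjGL P Q : Matrix (Fin r × Fin r) (Fin r × Fin r) K) *ᵥ
        vec (M : Matrix (Fin r) (Fin r) K)ᵀ = vec (M : Matrix (Fin r) (Fin r) K)ᵀ ↔
      P * M = M * Q := by
  rw [conjGL_mulVec_vec_transpose, vec_inj, transpose_inj, ← Units.val_mul, ← Units.val_mul,
    Units.val_inj, mul_inv_eq_iff_eq_mul]

end ConjugationAction

theorem glPadicIncl_injective (ℓ r : ℕ) [Fact ℓ.Prime] : Function.Injective (glPadicIncl ℓ r) :=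
  fun _ _ h => Units.ext <| Matrix.map_injective Subtype.coe_injective (congrArg Units.val h)

theorem equivariant_iso_of_connected_monodromy_general
    (ℓ r : ℕ) [Fact ℓ.Prime] (k : Type*) [Field k]
    (ρT ρU : Field.absoluteGaloisGroup k →* GL (Fin r) ℤ_[ℓ])
    (hform : ∃ E : IntermediateField k (AlgebraicClosure k), FiniteDimensional k E ∧
      ∃ ψ : GL (Fin r) ℤ_[ℓ], ∀ g : Field.absoluteGaloisGroup k,
        (g : AlgebraicClosure k ≃ₐ[k] AlgebraicClosure k) ∈ E.fixingSubgroup →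
          ρU g * ψ = ψ * ρT g)
    (hconn : zIsConnected (zClosure (Set.range fun g : Field.absoluteGaloisGroup k =>
      conjGL (glPadicIncl ℓ r (ρU g)) (glPadicIncl ℓ r (ρT g))))) :
    ∃ ψ : GL (Fin r) ℤ_[ℓ], ∀ g : Field.absoluteGaloisGroup k, ρU g * ψ = ψ * ρT g := by
  obtain ⟨E, hE, ψ, hψ⟩ := hform
  let := zariskiGL (Fin r × Fin r) ℚ_[ℓ]
  have := separatelyContinuousMul_zariskiGL (n := Fin r × Fin r) (K := ℚ_[ℓ])
  have := continuousInv_zariskiGL (n := Fin r × Fin r) (K := ℚ_[ℓ])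
  let N : Subgroup (Field.absoluteGaloisGroup k) := E.fixingSubgroup
  have : N.FiniteIndex := E.finiteIndex_fixingSubgroup
  let φ : Field.absoluteGaloisGroup k →* GL (Fin r × Fin r) ℚ_[ℓ] :=
    (conjGLHom ℚ_[ℓ] r).comp (((glPadicIncl ℓ r).comp ρU).prod ((glPadicIncl ℓ r).comp ρT))
  let v : Fin r × Fin r → ℚ_[ℓ] := vec (glPadicIncl ℓ r ψ : Matrix (Fin r) (Fin r) ℚ_[ℓ])ᵀ
  let stab := {x : GL (Fin r × Fin r) ℚ_[ℓ] | (x : Matrix _ _ ℚ_[ℓ]) *ᵥ v = v}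
  have hφN : φ '' N ⊆ stab := by
    rintro _ ⟨g, hg, rfl⟩
    exact (conjGL_mulVec_vec_transpose_eq_self_iff _ _ _).2 (by simp [← map_mul, hψ g hg])
  have hφ : closure (Set.range φ) ⊆ stab :=
    (φ.closure_range_subset_closure_image_of_isPreconnected N hconn.isPreconnected).trans
      (closure_minimal hφN (isClosed_zariskiGL_setOf_mulVec_eq v))
  refine ⟨ψ, fun g => glPadicIncl_injective ℓ r ?_⟩
  simpa [φ] using
    (conjGL_mulVec_vec_transpose_eq_self_iff _ _ _).1 (hφ (subset_closure ⟨g, rfl⟩))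

/-- Let `k` be a field with absolute Galois group `π₁(k)`, `ℓ` a prime
invertible in `k`, and `T`, `U` two finitely generated free `ℤ_ℓ`-modules (of rank `r`) with
continuous `π₁(k)`-actions `ρT`, `ρU`. Suppose there is a finite extension `k ⊆ k_ℓ` and a
`π₁(k_ℓ)`-equivariant isomorphism `T ≅ U` (an invertible matrix `ψ` intertwining the actions
on the fixing subgroup of `k_ℓ`), and suppose that the Zariski closure of the image of
`π₁(k)` acting on `H ⊗ ℚ_ℓ` is connected, where `H = T^∨ ⊗ U` (the conjugation action
`A ↦ ρU(g) A ρT(g)⁻¹`). Then there is a `π₁(k)`-equivariant isomorphism `T ≅ U`. -/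
theorem equivariant_iso_of_connected_monodromy
    (ℓ r : ℕ) [Fact ℓ.Prime] (k : Type*) [Field k] (hℓ : (ℓ : k) ≠ 0)
    (ρT ρU : Field.absoluteGaloisGroup k →* GL (Fin r) ℤ_[ℓ])
    (hTcont : Continuous ρT) (hUcont : Continuous ρU)
    (hform : ∃ E : IntermediateField k (AlgebraicClosure k), FiniteDimensional k E ∧
      ∃ ψ : GL (Fin r) ℤ_[ℓ], ∀ g : Field.absoluteGaloisGroup k,
        (g : AlgebraicClosure k ≃ₐ[k] AlgebraicClosure k) ∈ E.fixingSubgroup →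
          ρU g * ψ = ψ * ρT g)
    (hconn : zIsConnected (zClosure (Set.range fun g : Field.absoluteGaloisGroup k =>
      conjGL (glPadicIncl ℓ r (ρU g)) (glPadicIncl ℓ r (ρT g))))) :
    ∃ ψ : GL (Fin r) ℤ_[ℓ], ∀ g : Field.absoluteGaloisGroup k, ρU g * ψ = ψ * ρT g :=
  equivariant_iso_of_connected_monodromy_general ℓ r k ρT ρU hform hconn
end
end
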